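/- arXiv:1211.0477 — 5 statements merged into one kernel-verified Lean document; each statement's English description precedes it below -/
import Mathlib

section
/- Let h₊ be the discrete Dirichlet Laplacian on ℓ²(ℕ), defined by (h₊u)(n) = u(n+1) + u(n-1) for n ≥ 1 and (h₊u)(0) = u(1). Then for real x with |x| > 2, the matrix element of the resolvent at the boundary site satisfies ⟨δ₀, (h₊ - x)⁻¹ δ₀⟩ = -ζ₁(x), where ζ₁(x) = (x/2)(1 - √(1-4/x²)). -/
noncomputable def zeta1 (x : ℝ) : ℝ := x / 2 * (1 - Real.sqrt (1 - 4 / x ^ 2))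

/-- ℓ²(ℕ) over ℂ. -/
noncomputable abbrev L2 := lp (fun _ : ℕ => ℂ) 2

/-!
For `|x| > 2` the root `ζ = ζ₁(x)` of `ζ² - xζ + 1 = 0` satisfies `|ζ| < 1`, so `n ↦ ζ^(n+1)` is a
square-summable solution of `u(n+1) + u(n-1) = x u(n)` for `n ≥ 1`. At the boundary the Dirichlet
condition `u(-1) = 0` fails by `ζ⁰ = 1`, i.e. `(h₊ - x) u = -δ₀`, hence `(h₊ - x)⁻¹ δ₀ = -u`, whose
value at `0` is `-ζ`.
-/

open scoped ENNReal

lemma sq_mul_sqrt_one_sub_four_div_sq {x : ℝ} (hx : 2 ≤ |x|) :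
    x ^ 2 * Real.sqrt (1 - 4 / x ^ 2) ^ 2 = x ^ 2 - 4 := by
  have hx2 : 4 ≤ x ^ 2 := by nlinarith [sq_abs x]
  rw [Real.sq_sqrt (by rw [sub_nonneg, div_le_one (by positivity)]; exact hx2), mul_sub, mul_one,
    mul_div_cancel₀ _ (by positivity)]

lemma zeta1_sq_sub_mul_add_one {x : ℝ} (hx : 2 ≤ |x|) :
    zeta1 x ^ 2 - x * zeta1 x + 1 = 0 := by
  unfold zeta1
  linear_combination (1 / 4) * sq_mul_sqrt_one_sub_four_div_sq hx

lemma abs_zeta1_lt_one {x : ℝ} (hx : 2 < |x|) : |zeta1 x| < 1 := by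
  set s := Real.sqrt (1 - 4 / x ^ 2)
  have hs : |x| ^ 2 * s ^ 2 = |x| ^ 2 - 4 := by
    rw [sq_abs]; exact sq_mul_sqrt_one_sub_four_div_sq hx.le
  have hs0 : 0 ≤ s := Real.sqrt_nonneg _
  have hs1 : s < 1 := by
    by_contra! h
    nlinarith [mul_le_mul_of_nonneg_left (one_le_pow₀ h : 1 ≤ s ^ 2) (sq_nonneg |x|)]
  have hprod : (|x| * (1 - s)) * (|x| * (1 + s)) = 4 := by linear_combination -hs
  have hlarge : 2 < |x| * (1 + s) := by nlinarith
  have hzeta : |zeta1 x| = |x| * (1 - s) / 2 := by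
    rw [zeta1, abs_mul, abs_div, abs_of_pos (sub_pos.mpr hs1), abs_two]; ring
  rw [hzeta]
  nlinarith

lemma memℓp_pow_succ {z : ℂ} (hz : ‖z‖ < 1) {p : ℝ≥0∞} (hp : 0 < p.toReal) :
    Memℓp (fun n : ℕ => z ^ (n + 1)) p := by
  apply memℓp_gen
  have hq : ‖z‖ ^ p.toReal < 1 := Real.rpow_lt_one (norm_nonneg z) hz hp
  refine ((summable_geometric_of_lt_one (by positivity) hq).mul_left (‖z‖ ^ p.toReal)).congr
    fun n => ?_
  rw [norm_pow, ← Real.rpow_natCast, ← Real.rpow_mul (norm_nonneg z), ← Real.rpow_natCast,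
    ← Real.rpow_mul (norm_nonneg z), ← Real.rpow_add' (norm_nonneg z) (by positivity)]
  push_cast
  ring_nf

noncomputable def jostSolution (z : ℂ) (hz : ‖z‖ < 1) : L2 :=
  ⟨fun n => z ^ (n + 1), memℓp_pow_succ hz (by norm_num)⟩

@[simp]
lemma jostSolution_apply (z : ℂ) (hz : ‖z‖ < 1) (n : ℕ) :
    (jostSolution z hz : ∀ _ : ℕ, ℂ) n = z ^ (n + 1) :=
  rfl

lemma sub_smul_one_jostSolution (H : L2 →L[ℂ] L2)
    (hH0 : ∀ u : L2, (H u : ∀ _ : ℕ, ℂ) 0 = (u : ∀ _ : ℕ, ℂ) 1)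
    (hHn : ∀ u : L2, ∀ n : ℕ,
      (H u : ∀ _ : ℕ, ℂ) (n + 1) = (u : ∀ _ : ℕ, ℂ) (n + 2) + (u : ∀ _ : ℕ, ℂ) n)
    {x z : ℂ} (hz : ‖z‖ < 1) (hzx : z ^ 2 - x * z + 1 = 0) :
    (H - x • 1) (jostSolution z hz) = -lp.single 2 (0 : ℕ) (1 : ℂ) := by
  ext n
  simp only [sub_apply, smul_apply, one_apply_eq_self, lp.coeFn_sub, lp.coeFn_smul, lp.coeFn_neg,
    Pi.sub_apply, Pi.smul_apply, Pi.neg_apply, smul_eq_mul]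
  cases n with
  | zero =>
    simp only [hH0, jostSolution_apply, lp.single_apply_self]
    linear_combination hzx
  | succ m =>
    simp only [hHn, jostSolution_apply, lp.single_apply_ne 2 0 1 m.succ_ne_zero, neg_zero]
    linear_combination z ^ (m + 1) * hzx

theorem stmt2_general (H : L2 →L[ℂ] L2)
    (hH0 : ∀ u : L2, (H u : ∀ _ : ℕ, ℂ) 0 = (u : ∀ _ : ℕ, ℂ) 1)
    (hHn : ∀ u : L2, ∀ n : ℕ,
      (H u : ∀ _ : ℕ, ℂ) (n + 1) = (u : ∀ _ : ℕ, ℂ) (n + 2) + (u : ∀ _ : ℕ, ℂ) n)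
    (x : ℝ) (hx : 2 < |x|)
    (R : L2 →L[ℂ] L2)
    (hR2 : R * (H - (x : ℂ) • 1) = 1) :
    (inner ℂ (lp.single 2 (0 : ℕ) (1 : ℂ)) (R (lp.single 2 (0 : ℕ) (1 : ℂ))) : ℂ)
      = -(zeta1 x : ℝ) := by
  have hζ : ‖(zeta1 x : ℂ)‖ < 1 := by simpa using abs_zeta1_lt_one hx
  have hquad : (zeta1 x : ℂ) ^ 2 - x * zeta1 x + 1 = 0 := by
    exact_mod_cast congrArg Complex.ofReal (zeta1_sq_sub_mul_add_one hx.le)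
  have hRδ : R (lp.single 2 0 1) = -jostSolution _ hζ :=
    calc R (lp.single 2 0 1) = -R ((H - (x : ℂ) • 1) (jostSolution _ hζ)) := by
          rw [sub_smul_one_jostSolution H hH0 hHn hζ hquad, map_neg, neg_neg]
      _ = -jostSolution _ hζ := by rw [← mul_apply_eq_comp, hR2, one_apply_eq_self]
  rw [hRδ, lp.inner_single_left]
  simp only [lp.coeFn_neg, Pi.neg_apply, jostSolution_apply]
  simp

/-- Boundary matrix element of the resolvent of the half-line Dirichlet Laplacian:
`⟨δ₀, (h₊ - x)⁻¹ δ₀⟩ = -ζ₁(x)` for real `x` with `|x| > 2`. -/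
theorem stmt2 (H : L2 →L[ℂ] L2)
    (hH0 : ∀ u : L2, (H u : ∀ _ : ℕ, ℂ) 0 = (u : ∀ _ : ℕ, ℂ) 1)
    (hHn : ∀ u : L2, ∀ n : ℕ,
      (H u : ∀ _ : ℕ, ℂ) (n + 1) = (u : ∀ _ : ℕ, ℂ) (n + 2) + (u : ∀ _ : ℕ, ℂ) n)
    (x : ℝ) (hx : 2 < |x|)
    (R : L2 →L[ℂ] L2)
    (hR1 : (H - (x : ℂ) • 1) * R = 1) (hR2 : R * (H - (x : ℂ) • 1) = 1) :
    (inner ℂ (lp.single 2 (0 : ℕ) (1 : ℂ)) (R (lp.single 2 (0 : ℕ) (1 : ℂ))) : ℂ)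
      = -(zeta1 x : ℝ) :=
  stmt2_general H hH0 hHn x hx R hR2
end

section
/- With G(x; v) = E₀ - x + τ²(ζ₁(x-v) + ζ₁(x)), E₀ ≥ 10, |τ| small: for each v ∈ [0, v_{c,1}) there exists a unique λ(v) ∈ (v+2, ∞) with G(λ(v); v) = 0, while for v > v_{c,1} the function G(·; v) has no zero in (v+2, ∞). Here v_{c,1} is the unique solution of G(2+v; v) = 0. -/
noncomputable def Gf (E₀ τ x v : ℝ) : ℝ := E₀ - x + τ ^ 2 * (zeta1 (x - v) + zeta1 x)

lemma zeta1_eq {y : ℝ} (hy : 2 ≤ y) :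
    zeta1 y = 2 / (y + Real.sqrt (y ^ 2 - 4)) := by
  have hy0 : 0 < y := by linarith
  have h4 : (0:ℝ) ≤ y ^ 2 - 4 := by nlinarith
  have hs : Real.sqrt (1 - 4 / y ^ 2) = Real.sqrt (y ^ 2 - 4) / y := by
    rw [show (1 - 4 / y ^ 2) = (y ^ 2 - 4) / y ^ 2 by field_simp,
      Real.sqrt_div h4, Real.sqrt_sq hy0.le]
  have hsq := Real.sq_sqrt h4
  have hsn := Real.sqrt_nonneg (y ^ 2 - 4)
  have hpos : 0 < y + Real.sqrt (y ^ 2 - 4) := by linarith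
  unfold zeta1
  rw [hs]
  field_simp
  nlinarith [hsq]

lemma zeta1_anti {a b : ℝ} (ha : 2 ≤ a) (hab : a ≤ b) : zeta1 b ≤ zeta1 a := by
  rw [zeta1_eq ha, zeta1_eq (ha.trans hab)]
  have h4 : (0:ℝ) ≤ a ^ 2 - 4 := by nlinarith
  have hpos : 0 < a + Real.sqrt (a ^ 2 - 4) := by
    have := Real.sqrt_nonneg (a ^ 2 - 4); linarith
  have hle : a + Real.sqrt (a ^ 2 - 4) ≤ b + Real.sqrt (b ^ 2 - 4) := by
    have : a ^ 2 - 4 ≤ b ^ 2 - 4 := by nlinarith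
    have := Real.sqrt_le_sqrt this
    linarith
  exact div_le_div_of_nonneg_left (by norm_num) hpos hle

lemma zeta1_pos {y : ℝ} (hy : 2 ≤ y) : 0 < zeta1 y := by
  rw [zeta1_eq hy]
  have := Real.sqrt_nonneg (y ^ 2 - 4)
  positivity

lemma zeta1_le_one {y : ℝ} (hy : 2 ≤ y) : zeta1 y ≤ 1 := by
  rw [zeta1_eq hy]
  rw [div_le_one (by have := Real.sqrt_nonneg (y ^ 2 - 4); linarith)]
  have := Real.sqrt_nonneg (y ^ 2 - 4); linarith

lemma zeta1_contAt {x : ℝ} (hx : x ≠ 0) : ContinuousAt zeta1 x := by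
  unfold zeta1
  have h2 : x ^ 2 ≠ 0 := pow_ne_zero 2 hx
  fun_prop (disch := assumption)

/-- G is strictly decreasing in x on [v+2, ∞) when v ≥ 0. -/
lemma Gf_strictAnti (E₀ τ v : ℝ) (hv : 0 ≤ v) {a b : ℝ}
    (ha : v + 2 ≤ a) (hab : a < b) : Gf E₀ τ b v < Gf E₀ τ a v := by
  have h1 : zeta1 (b - v) ≤ zeta1 (a - v) := zeta1_anti (by linarith) (by linarith)
  have h2 : zeta1 b ≤ zeta1 a := zeta1_anti (by linarith) (by linarith)
  have hτ : (0:ℝ) ≤ τ ^ 2 := sq_nonneg τ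
  have : τ ^ 2 * (zeta1 (b - v) + zeta1 b) ≤ τ ^ 2 * (zeta1 (a - v) + zeta1 a) :=
    mul_le_mul_of_nonneg_left (by linarith) hτ
  unfold Gf
  linarith

/-- For `v ∈ [0, v_{c,1})` there is a unique `λ(v) ∈ (v+2,∞)` with `G(λ(v);v) = 0`, while
for `v > v_{c,1}` the function `G(·;v)` has no zero in `(v+2,∞)`; here `v_{c,1}` is the
unique solution of `G(2+v;v) = 0`. -/
theorem stmt8 (E₀ : ℝ) (hE : 10 ≤ E₀) :
    ∃ τ₀ > (0 : ℝ), ∀ τ : ℝ, τ ≠ 0 → |τ| ≤ τ₀ →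
      ∀ vc1 : ℝ, 4 < vc1 → Gf E₀ τ (2 + vc1) vc1 = 0 →
        (∀ v : ℝ, 0 ≤ v → v < vc1 →
          ∃! lam : ℝ, lam ∈ Set.Ioi (v + 2) ∧ Gf E₀ τ lam v = 0) ∧
        (∀ v : ℝ, vc1 < v → ∀ x ∈ Set.Ioi (v + 2), Gf E₀ τ x v ≠ 0) := by
  refine ⟨1, one_pos, fun τ _ hτ1 vc1 hvc1 hGvc1 => ?_⟩
  have hτsq : τ ^ 2 ≤ 1 := by
    have : |τ| ^ 2 ≤ 1 ^ 2 := by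
      apply pow_le_pow_left₀ (abs_nonneg τ) hτ1
    simpa [sq_abs] using this
  have hτ0 : (0:ℝ) ≤ τ ^ 2 := sq_nonneg τ
  -- value of G at the left endpoint, as a function of v
  have hend : ∀ v : ℝ, 0 ≤ v →
      Gf E₀ τ (v + 2) v = E₀ - (v + 2) + τ ^ 2 * (1 + zeta1 (v + 2)) := by
    intro v hv
    have h2 : zeta1 (v + 2 - v) = zeta1 2 := by norm_num
    have hz2 : zeta1 (2:ℝ) = 1 := by
      unfold zeta1; norm_num
    unfold Gf
    rw [h2, hz2]
  have hvc1' : Gf E₀ τ (vc1 + 2) vc1 = 0 := by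
    rw [show vc1 + 2 = 2 + vc1 by ring]; exact hGvc1
  have hvc1end : E₀ - (vc1 + 2) + τ ^ 2 * (1 + zeta1 (vc1 + 2)) = 0 := by
    rw [← hend vc1 (by linarith)]; exact hvc1'
  constructor
  · -- existence and uniqueness for v < vc1
    intro v hv hvlt
    have hleftpos : 0 < Gf E₀ τ (v + 2) v := by
      rw [hend v hv]
      have : zeta1 (vc1 + 2) ≤ zeta1 (v + 2) := zeta1_anti (by linarith) (by linarith)
      nlinarith
    -- choose right endpoint
    set X : ℝ := max (E₀ + 3) (v + 3) with hX
    have hX1 : E₀ + 3 ≤ X := le_max_left _ _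
    have hX2 : v + 3 ≤ X := le_max_right _ _
    have hXgt : v + 2 < X := by linarith
    have hrightneg : Gf E₀ τ X v < 0 := by
      have h1 : zeta1 (X - v) ≤ 1 := zeta1_le_one (by linarith)
      have h2 : zeta1 X ≤ 1 := zeta1_le_one (by linarith)
      have p1 : 0 < zeta1 (X - v) := zeta1_pos (by linarith)
      have p2 : 0 < zeta1 X := zeta1_pos (by linarith)
      unfold Gf
      nlinarith
    have hcont : ContinuousOn (fun x => Gf E₀ τ x v) (Set.Icc (v + 2) X) := by
      intro x hx
      have hx1 : v + 2 ≤ x := hx.1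
      have hc : ContinuousAt (fun x => Gf E₀ τ x v) x := by
        have c1 : ContinuousAt zeta1 (x - v) :=
          zeta1_contAt (by intro h; rw [sub_eq_zero] at h; linarith)
        have c2 : ContinuousAt zeta1 x := zeta1_contAt (by intro h; rw [h] at hx1; linarith)
        have csub : ContinuousAt (fun y : ℝ => y - v) x := by fun_prop
        have c1' : ContinuousAt (fun y => zeta1 (y - v)) x :=
          ContinuousAt.comp (g := zeta1) (f := fun y : ℝ => y - v) c1 csub
        unfold Gf
        fun_prop
      exact hc.continuousWithinAt
    have h0mem : (0:ℝ) ∈ Set.Ioo (Gf E₀ τ X v) (Gf E₀ τ (v + 2) v) := ⟨hrightneg, hleftpos⟩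
    obtain ⟨lam, hlam, hlam0'⟩ := intermediate_value_Ioo' hXgt.le hcont h0mem
    have hlam0 : Gf E₀ τ lam v = 0 := hlam0'
    refine ⟨lam, ⟨hlam.1, hlam0⟩, ?_⟩
    rintro y ⟨hy, hy0⟩
    by_contra hne
    rcases lt_or_gt_of_ne hne with h | h
    · have := Gf_strictAnti E₀ τ v hv (le_of_lt hy) h
      rw [hy0, hlam0] at this; exact lt_irrefl 0 this
    · have := Gf_strictAnti E₀ τ v hv (le_of_lt hlam.1) h
      rw [hy0, hlam0] at this; exact lt_irrefl 0 this
  · -- no zero for v > vc1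
    intro v hvlt x hx
    have hv : 0 ≤ v := by linarith
    have hleftneg : Gf E₀ τ (v + 2) v < 0 := by
      rw [hend v hv]
      have : zeta1 (v + 2) ≤ zeta1 (vc1 + 2) := zeta1_anti (by linarith) (by linarith)
      nlinarith
    have := Gf_strictAnti E₀ τ v hv (le_refl (v + 2)) hx
    intro h0
    rw [h0] at this
    linarith
end

section
/- At the critical bias v = v_{c,1}, the function G satisfies G(x; v_{c,1}) ~ -τ²√(x - (v_{c,1}+2)) as x ↘ v_{c,1}+2; more precisely ∂ₓG(x; v_{c,1}) ~ -τ²/(2√(x-(v_{c,1}+2))) and G(v_{c,1}+2; v_{c,1}) = 0, so G(x;v_{c,1})/√(x-v_{c,1}-2) → -τ². -/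
open Filter Set

/-!
For `x ≥ 2`, `ζ₁(x) - x/2 = -√(x-2)·√(x+2)/2`. Hence, with `c = v + 2`, the function `G(·; v)` splits
as `H + τ²(ζ₁(x - v) - (x - v)/2)`, where `H` is differentiable at `c` and `H(c) = G(c; v) = 0`
(because `ζ₁(2) = 1`), so `H(x) = o(√(x - c))`, while the second term is `-τ²√(x-c)·√(x-c+4)/2`.
For the derivative only `ζ₁'(x - v)` blows up, and `2√(x-c)·ζ₁'(x - v) → -1`.
-/

open Topology

lemma zeta1_eq_s12 {x : ℝ} (hx : 0 < x) : zeta1 x = (x - √(x ^ 2 - 4)) / 2 := by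
  have h : 1 - 4 / x ^ 2 = (x ^ 2 - 4) / x ^ 2 := by field_simp
  rw [zeta1, h, Real.sqrt_div' _ (sq_nonneg x), Real.sqrt_sq hx.le]
  field_simp

lemma sqrt_sq_sub_four {x : ℝ} (hx : 2 ≤ x) : √(x ^ 2 - 4) = √(x - 2) * √(x + 2) := by
  rw [← Real.sqrt_mul (by linarith)]
  ring_nf

lemma zeta1_sub_half {x : ℝ} (hx : 2 ≤ x) : zeta1 x - x / 2 = -(√(x - 2) * √(x + 2)) / 2 := by
  rw [zeta1_eq_s12 (by linarith), sqrt_sq_sub_four hx]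
  ring

lemma zeta1_two : zeta1 2 = 1 := by
  norm_num [zeta1]

lemma sqrt_four : √(4 : ℝ) = 2 := by
  rw [show (4 : ℝ) = 2 ^ 2 by norm_num, Real.sqrt_sq zero_le_two]

lemma hasDerivAt_zeta1 {x : ℝ} (hx : 2 < x) :
    HasDerivAt zeta1 (1 / 2 - x / (2 * √(x ^ 2 - 4))) x := by
  have hpos : 0 < x ^ 2 - 4 := by nlinarith
  have hsqrt : HasDerivAt (fun y : ℝ => √(y ^ 2 - 4)) (2 * x / (2 * √(x ^ 2 - 4))) x := by
    simpa using ((hasDerivAt_pow 2 x).sub_const 4).sqrt hpos.ne'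
  have heq : (fun y : ℝ => (y - √(y ^ 2 - 4)) / 2) =ᶠ[𝓝 x] zeta1 := by
    filter_upwards [eventually_gt_nhds (by linarith : (0 : ℝ) < x)] with y hy
    exact (zeta1_eq_s12 hy).symm
  refine (((hasDerivAt_id x).sub hsqrt).div_const 2).congr_of_eventuallyEq heq.symm
    |>.congr_deriv ?_
  field_simp

lemma deriv_zeta1_mul_sqrt {x : ℝ} (hx : 2 < x) :
    deriv zeta1 x * (2 * √(x - 2)) = √(x - 2) - x / √(x + 2) := by
  have ha : 0 < √(x - 2) := Real.sqrt_pos.mpr (by linarith)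
  have hb : 0 < √(x + 2) := Real.sqrt_pos.mpr (by linarith)
  rw [(hasDerivAt_zeta1 hx).deriv, sqrt_sq_sub_four hx.le]
  field_simp

lemma continuousAt_deriv_zeta1 {x : ℝ} (hx : 2 < x) : ContinuousAt (deriv zeta1) x := by
  have hd : (fun y : ℝ => 1 / 2 - y / (2 * √(y ^ 2 - 4))) =ᶠ[𝓝 x] deriv zeta1 := by
    filter_upwards [eventually_gt_nhds hx] with y hy
    exact (hasDerivAt_zeta1 hy).deriv.symm
  refine ContinuousAt.congr ?_ hd
  have : √(x ^ 2 - 4) ≠ 0 := (Real.sqrt_pos.mpr (by nlinarith)).ne'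
  fun_prop (disch := positivity)

lemma tendsto_sqrt_sub_nhdsGT (c : ℝ) : Tendsto (fun x => √(x - c)) (𝓝[>] c) (𝓝 0) := by
  have h : Tendsto (fun x => √(x - c)) (𝓝 c) (𝓝 √(c - c)) :=
    (Real.continuous_sqrt.comp (continuous_sub_right c)).tendsto c
  simpa using h.mono_left nhdsWithin_le_nhds

lemma tendsto_sub_nhdsGT (v c : ℝ) : Tendsto (fun x => x - v) (𝓝[>] (v + c)) (𝓝[>] c) := by
  refine tendsto_nhdsWithin_iff.mpr ⟨?_, ?_⟩
  · simpa using ((continuous_sub_right v).tendsto (v + c)).mono_left nhdsWithin_le_nhds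
  · filter_upwards [self_mem_nhdsWithin] with x hx
    exact lt_sub_iff_add_lt'.mpr (mem_Ioi.mp hx)

lemma tendsto_zeta1_sub_half_div_sqrt :
    Tendsto (fun x => (zeta1 x - x / 2) / √(x - 2)) (𝓝[>] 2) (𝓝 (-1)) := by
  have hlim : Tendsto (fun x : ℝ => -√(x + 2) / 2) (𝓝[>] 2) (𝓝 (-1)) := by
    have h : ContinuousWithinAt (fun x : ℝ => -√(x + 2) / 2) (Ioi 2) 2 := by fun_prop
    convert h.tendsto using 2
    norm_num [sqrt_four]
  refine hlim.congr' ?_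
  filter_upwards [self_mem_nhdsWithin] with x hx
  have ha : 0 < √(x - 2) := Real.sqrt_pos.mpr (sub_pos.mpr hx)
  rw [zeta1_sub_half hx.le]
  field_simp

lemma tendsto_deriv_zeta1_mul_sqrt :
    Tendsto (fun x => deriv zeta1 x * (2 * √(x - 2))) (𝓝[>] 2) (𝓝 (-1)) := by
  have hlim : Tendsto (fun x : ℝ => √(x - 2) - x / √(x + 2)) (𝓝[>] 2) (𝓝 (-1)) := by
    have h : ContinuousWithinAt (fun x : ℝ => √(x - 2) - x / √(x + 2)) (Ioi 2) 2 := by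
      fun_prop (disch := positivity)
    convert h.tendsto using 2
    norm_num [sqrt_four]
  refine hlim.congr' ?_
  filter_upwards [self_mem_nhdsWithin] with x hx
  exact (deriv_zeta1_mul_sqrt hx).symm

lemma DifferentiableAt.tendsto_div_sqrt_sub {f : ℝ → ℝ} {c : ℝ} (hf : DifferentiableAt ℝ f c)
    (hc : f c = 0) : Tendsto (fun x => f x / √(x - c)) (𝓝[>] c) (𝓝 0) := by
  have hslope : Tendsto (slope f c) (𝓝[>] c) (𝓝 (deriv f c)) :=
    (hasDerivAt_iff_tendsto_slope.mp hf.hasDerivAt).mono_left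
      (nhdsWithin_mono c fun y hy => ne_of_gt (mem_Ioi.mp hy))
  have hlim := hslope.mul (tendsto_sqrt_sub_nhdsGT c)
  rw [mul_zero] at hlim
  refine hlim.congr' ?_
  filter_upwards [self_mem_nhdsWithin] with x hx
  have hxc : 0 < x - c := sub_pos.mpr hx
  have ha : 0 < √(x - c) := Real.sqrt_pos.mpr hxc
  rw [slope_def_field, hc, sub_zero]
  field_simp
  rw [Real.sq_sqrt hxc.le]

section Gf

variable {E₀ τ v : ℝ}

lemma tendsto_Gf_div_sqrt (hv : 0 < v) (h₀ : Gf E₀ τ (v + 2) v = 0) :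
    Tendsto (fun x => Gf E₀ τ x v / √(x - v - 2)) (𝓝[>] (v + 2)) (𝓝 (-τ ^ 2)) := by
  set H : ℝ → ℝ := fun x => E₀ - x + τ ^ 2 * ((x - v) / 2 + zeta1 x)
  have hH : DifferentiableAt ℝ H (v + 2) := by
    have := (hasDerivAt_zeta1 (by linarith : (2 : ℝ) < v + 2)).differentiableAt
    fun_prop
  have hH₀ : H (v + 2) = 0 := by
    rw [← h₀]
    simp only [H, Gf, add_sub_cancel_left, zeta1_two]
    ring
  have hsing := (tendsto_zeta1_sub_half_div_sqrt.comp (tendsto_sub_nhdsGT v 2)).const_mul (τ ^ 2)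
  have hlim := (hH.tendsto_div_sqrt_sub hH₀).add hsing
  rw [zero_add, mul_neg_one] at hlim
  refine hlim.congr fun x => ?_
  simp only [H, Gf, Function.comp_apply, sub_add_eq_sub_sub]
  ring

lemma hasDerivAt_Gf (hv : 0 < v) {x : ℝ} (hx : v + 2 < x) :
    HasDerivAt (fun y => Gf E₀ τ y v) (-1 + τ ^ 2 * (deriv zeta1 (x - v) + deriv zeta1 x)) x := by
  have h₁ : DifferentiableAt ℝ zeta1 (x - v) :=
    (hasDerivAt_zeta1 (by linarith)).differentiableAt
  have h₂ : DifferentiableAt ℝ zeta1 x := (hasDerivAt_zeta1 (by linarith)).differentiableAt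
  exact ((hasDerivAt_id x).const_sub E₀).add
    (((h₁.hasDerivAt.comp_sub_const x v).add h₂.hasDerivAt).const_mul (τ ^ 2))

lemma tendsto_deriv_Gf_mul_sqrt (hv : 0 < v) :
    Tendsto (fun x => deriv (fun y => Gf E₀ τ y v) x * (2 * √(x - v - 2)))
      (𝓝[>] (v + 2)) (𝓝 (-τ ^ 2)) := by
  have hreg : Tendsto (fun x => (-1 + τ ^ 2 * deriv zeta1 x) * (2 * √(x - (v + 2))))
      (𝓝[>] (v + 2)) (𝓝 0) := by
    have hcont := (continuousAt_deriv_zeta1 (by linarith : (2 : ℝ) < v + 2)).tendsto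
    simpa using ((hcont.mono_left nhdsWithin_le_nhds).const_mul (τ ^ 2) |>.const_add (-1)).mul
      ((tendsto_sqrt_sub_nhdsGT (v + 2)).const_mul 2)
  have hsing := (tendsto_deriv_zeta1_mul_sqrt.comp (tendsto_sub_nhdsGT v 2)).const_mul (τ ^ 2)
  have hlim := hreg.add hsing
  rw [zero_add, mul_neg_one] at hlim
  refine hlim.congr' ?_
  filter_upwards [self_mem_nhdsWithin] with x hx
  rw [(hasDerivAt_Gf hv hx).deriv, Function.comp_apply, sub_add_eq_sub_sub]
  ring

end Gf

theorem stmt12_general (E₀ : ℝ) :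
    ∃ τ₀ > (0 : ℝ), ∀ τ : ℝ, τ ≠ 0 → |τ| ≤ τ₀ →
      ∀ vc1 : ℝ, 4 < vc1 → Gf E₀ τ (2 + vc1) vc1 = 0 →
        Gf E₀ τ (vc1 + 2) vc1 = 0 ∧
        Tendsto (fun x => Gf E₀ τ x vc1 / Real.sqrt (x - vc1 - 2))
          (nhdsWithin (vc1 + 2) (Set.Ioi (vc1 + 2))) (nhds (-τ ^ 2)) ∧
        Tendsto (fun x => deriv (fun y => Gf E₀ τ y vc1) x * (2 * Real.sqrt (x - vc1 - 2)))
          (nhdsWithin (vc1 + 2) (Set.Ioi (vc1 + 2))) (nhds (-τ ^ 2)) := by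
  refine ⟨1, one_pos, fun τ _ _ v hv h₀ => ?_⟩
  have hv₀ : 0 < v := by linarith
  rw [add_comm] at h₀
  exact ⟨h₀, tendsto_Gf_div_sqrt hv₀ h₀, tendsto_deriv_Gf_mul_sqrt hv₀⟩

/-- At the critical bias `v = v_{c,1}`: `G(v_{c,1}+2; v_{c,1}) = 0`,
`∂ₓG(x;v_{c,1}) ~ -τ²/(2√(x-v_{c,1}-2))` and `G(x;v_{c,1})/√(x-v_{c,1}-2) → -τ²`
as `x ↘ v_{c,1}+2`. -/
theorem stmt12 (E₀ : ℝ) (hE : 10 ≤ E₀) :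
    ∃ τ₀ > (0 : ℝ), ∀ τ : ℝ, τ ≠ 0 → |τ| ≤ τ₀ →
      ∀ vc1 : ℝ, 4 < vc1 → Gf E₀ τ (2 + vc1) vc1 = 0 →
        Gf E₀ τ (vc1 + 2) vc1 = 0 ∧
        Tendsto (fun x => Gf E₀ τ x vc1 / Real.sqrt (x - vc1 - 2))
          (nhdsWithin (vc1 + 2) (Set.Ioi (vc1 + 2))) (nhds (-τ ^ 2)) ∧
        Tendsto (fun x => deriv (fun y => Gf E₀ τ y vc1) x * (2 * Real.sqrt (x - vc1 - 2)))
          (nhdsWithin (vc1 + 2) (Set.Ioi (vc1 + 2))) (nhds (-τ ^ 2)) :=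
  stmt12_general E₀
end

section
/- At the critical value v = v_{c,1}, the threshold energy v_{c,1}+2 is not an eigenvalue of h(v_{c,1}): for every canonical basis vector ψ ∈ {|m₋⟩, |m₊⟩ : m ≥ 0} ∪ {|S⟩}, lim_{x ↘ v_{c,1}+2} (x - v_{c,1} - 2)⟨ψ, R(x)ψ⟩ = 0, where R(x) = (h(v_{c,1}) - x)⁻¹; hence the eigenprojection at the threshold vanishes. -/
open Filter Set

/-!
At the threshold `λ = v_{c,1} + 2`, a solution of `A u = λ u` has coefficients along the biased
lead satisfying the free recurrence at its band edge, so they form an arithmetic progression; by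
Bessel's inequality they tend to `0`, hence vanish. Since `τ ≠ 0` the dot coefficient vanishes
too, and on the unbiased lead `λ > 2` lies outside the band, so there the coefficients grow
unless they are all zero. Hence `λ` is not an eigenvalue.

Since the resolvent exists for every `x > λ`, the spectrum of `A` lies below `λ`, so `A ≤ λ`
and `‖(x - λ) R(x)‖ ≤ 1`. On the range of `A - λ`, which is dense because its kernel is trivial,
`(x - λ) R(x) → 0` strongly, and the uniform bound extends this to every vector.
-/

open Topology

lemma eq_zero_of_tendsto_zero_of_sub_eq_sub {E : Type*} [AddCommGroup E] [TopologicalSpace E]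
    [IsTopologicalAddGroup E] [T2Space E] {b : ℕ → E}
    (hb : ∀ m, b (m + 2) - b (m + 1) = b (m + 1) - b m) (hlim : Tendsto b atTop (𝓝 0)) :
    ∀ m, b m = 0 := by
  have hdiff : ∀ m, b (m + 1) - b m = b 1 - b 0 := by
    intro m
    induction m with
    | zero => rfl
    | succ n ih => rw [hb, ih]
  have hdiff_zero : b 1 - b 0 = 0 := by
    refine tendsto_nhds_unique ?_ (by simpa using (hlim.comp (tendsto_add_atTop_nat 1)).sub hlim)
    simp only [hdiff, tendsto_const_nhds]
  have hconst : ∀ m, b m = b 0 := by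
    intro m
    induction m with
    | zero => rfl
    | succ n ih => rw [← ih, ← sub_eq_zero, hdiff, hdiff_zero]
  intro m
  rw [hconst m]
  exact tendsto_nhds_unique tendsto_const_nhds (hlim.congr hconst)

lemma eq_zero_of_tendsto_zero_of_add_eq_smul {𝕜 E : Type*} [NormedField 𝕜]
    [NormedAddCommGroup E] [NormedSpace 𝕜 E] {l : 𝕜} (hl : 2 ≤ ‖l‖) {c : ℕ → E}
    (h₁ : c 1 = l • c 0) (hc : ∀ m, c (m + 2) + c m = l • c (m + 1))
    (hlim : Tendsto c atTop (𝓝 0)) : ∀ m, c m = 0 := by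
  have hstep : ∀ m, ‖c m‖ ≤ ‖c (m + 1)‖ := by
    intro m
    induction m with
    | zero =>
      rw [h₁, norm_smul]
      nlinarith [norm_nonneg (c 0)]
    | succ n ih =>
      have h : ‖l • c (n + 1)‖ - ‖c n‖ ≤ ‖c (n + 2)‖ := by
        rw [← add_sub_cancel_right (c (n + 2)) (c n), hc]
        exact norm_sub_norm_le _ _
      rw [norm_smul] at h
      show ‖c (n + 1)‖ ≤ ‖c (n + 2)‖
      nlinarith [norm_nonneg (c (n + 1))]
  intro m
  have := (monotone_nat_of_le_succ hstep).ge_of_tendsto (by simpa using hlim.norm) m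
  exact norm_le_zero_iff.mp this

lemma Orthonormal.tendsto_inner_cofinite_zero {ι 𝕜 E : Type*} [RCLike 𝕜] [NormedAddCommGroup E]
    [InnerProductSpace 𝕜 E] {v : ι → E} (hv : Orthonormal 𝕜 v) (x : E) :
    Tendsto (fun i => inner 𝕜 (v i) x) cofinite (𝓝 0) := by
  rw [tendsto_zero_iff_norm_tendsto_zero]
  simpa [Real.sqrt_sq (norm_nonneg _)] using
    (hv.inner_products_summable x).tendsto_cofinite_zero.sqrt

lemma eq_zero_of_forall_inner_eq_zero {ι 𝕜 E : Type*} [RCLike 𝕜] [NormedAddCommGroup E]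
    [InnerProductSpace 𝕜 E] [CompleteSpace E] {v : ι → E}
    (hv : (Submodule.span 𝕜 (range v)).topologicalClosure = ⊤) {x : E}
    (hx : ∀ i, inner 𝕜 (v i) x = 0) : x = 0 := by
  have hortho : Submodule.span 𝕜 (range v) ⟂ Submodule.span 𝕜 {x} := by
    simpa [Submodule.isOrtho_span] using hx
  have hle := Submodule.isOrtho_iff_le.mp hortho.symm
  rwa [Submodule.topologicalClosure_eq_top_iff.mp hv, le_bot_iff,
    Submodule.span_singleton_eq_bot] at hle

lemma IsSelfAdjoint.le_algebraMap_of_isUnit_sub {A : Type*} [CStarAlgebra A] [PartialOrder A]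
    [StarOrderedRing A] {a : A} (ha : IsSelfAdjoint a) {l : ℝ}
    (h : ∀ x : ℝ, l < x → IsUnit (a - algebraMap ℝ A x)) : a ≤ algebraMap ℝ A l := by
  refine le_algebraMap_of_spectrum_le (fun x hx => ?_) ha
  by_contra! hlx
  have hunit := (h x hlx).neg
  rw [neg_sub] at hunit
  exact spectrum.mem_iff.mp hx hunit

section Hilbert

variable {H : Type*} [NormedAddCommGroup H] [InnerProductSpace ℂ H]

lemma ContinuousLinearMap.sub_mul_norm_le_norm_smul_sub_apply {A : H →L[ℂ] H} {l : ℝ}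
    (hA : A ≤ algebraMap ℝ (H →L[ℂ] H) l) (x : ℝ) (v : H) :
    (x - l) * ‖v‖ ≤ ‖(x : ℂ) • v - A v‖ := by
  have hpos : 0 ≤ (inner ℂ v ((l : ℂ) • v - A v)).re := by
    have happ : (algebraMap ℝ (H →L[ℂ] H) l - A) v = (l : ℂ) • v - A v := by
      simp [Algebra.algebraMap_eq_smul_one, Complex.coe_smul]
    have h := ((ContinuousLinearMap.le_def _ _).mp hA).re_inner_nonneg_right v
    rwa [happ] at h
  have hsplit : inner ℂ v ((x : ℂ) • v - A v)
      = inner ℂ v ((l : ℂ) • v - A v) + (((x - l) * ‖v‖ ^ 2 : ℝ) : ℂ) := by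
    have hnorm : inner ℂ v v = ((‖v‖ ^ 2 : ℝ) : ℂ) := by
      exact_mod_cast inner_self_eq_norm_sq_to_K v
    simp only [inner_sub_right, inner_smul_right, hnorm]
    push_cast
    ring
  have hcs : (inner ℂ v ((x : ℂ) • v - A v)).re ≤ ‖v‖ * ‖(x : ℂ) • v - A v‖ :=
    (Complex.re_le_norm _).trans (norm_inner_le_norm _ _)
  rw [hsplit, Complex.add_re, Complex.ofReal_re] at hcs
  rcases (norm_nonneg v).eq_or_lt with hv | hv
  · rw [← hv, mul_zero]; exact norm_nonneg _
  · nlinarith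

lemma IsSelfAdjoint.denseRange_of_injective [CompleteSpace H] {T : H →L[ℂ] H}
    (hT : IsSelfAdjoint T) (hinj : Function.Injective T) : DenseRange T := by
  have hker : (LinearMap.range (T : H →ₗ[ℂ] H))ᗮ = ⊥ := by
    rw [hT.isSymmetric.orthogonal_range, LinearMap.ker_eq_bot]
    exact hinj
  exact Submodule.dense_iff_topologicalClosure_eq_top.mpr
    (Submodule.topologicalClosure_eq_top_iff.mpr hker)

lemma tendsto_zero_of_norm_le_of_denseRange {ι 𝕜 E F G : Type*} [NontriviallyNormedField 𝕜]
    [SeminormedAddCommGroup E] [NormedSpace 𝕜 E] [SeminormedAddCommGroup F] [NormedSpace 𝕜 F]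
    {l : Filter ι} {T : ι → E →L[𝕜] F} {C : ℝ}
    (hC : ∀ᶠ i in l, ‖T i‖ ≤ C) {g : G → E} (hg : DenseRange g)
    (hT : ∀ y, Tendsto (fun i => T i (g y)) l (𝓝 0)) (x : E) :
    Tendsto (fun i => T i x) l (𝓝 0) := by
  rw [Metric.tendsto_nhds]
  intro ε hε
  obtain ⟨y, hy⟩ := hg.exists_dist_lt x (show 0 < ε / 2 / (|C| + 1) by positivity)
  filter_upwards [hC, Metric.tendsto_nhds.mp (hT y) (ε / 2) (half_pos hε)] with i hCi hTi
  rw [dist_zero_right] at hTi ⊢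
  rw [dist_eq_norm] at hy
  calc ‖T i x‖ ≤ ‖T i (x - g y)‖ + ‖T i (g y)‖ := by
        rw [map_sub]; exact norm_le_norm_sub_add _ _
    _ ≤ (|C| + 1) * ‖x - g y‖ + ‖T i (g y)‖ := by
        gcongr
        exact (T i).le_of_opNorm_le (hCi.trans (by linarith [le_abs_self C])) _
    _ < (|C| + 1) * (ε / 2 / (|C| + 1)) + ε / 2 := by gcongr
    _ = ε := by field_simp; ring

lemma norm_sub_smul_resolvent_apply_le [CompleteSpace H] {A : H →L[ℂ] H} (hA : IsSelfAdjoint A)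
    {l : ℝ} {R : ℝ → H →L[ℂ] H}
    (hR : ∀ x : ℝ, l < x → (A - (x : ℂ) • 1) * R x = 1 ∧ R x * (A - (x : ℂ) • 1) = 1)
    {x : ℝ} (hx : l < x) (v : H) : ‖((x - l : ℝ) : ℂ) • R x v‖ ≤ ‖v‖ := by
  have hle : A ≤ algebraMap ℝ (H →L[ℂ] H) l := hA.le_algebraMap_of_isUnit_sub fun y hy =>
    ⟨⟨_, R y, (hR y hy).1, (hR y hy).2⟩, by rw [Algebra.algebraMap_eq_smul_one, ← Complex.coe_smul]⟩
  have hright : A (R x v) - (x : ℂ) • R x v = v := by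
    simpa using congr($((hR x hx).1) v)
  have h := ContinuousLinearMap.sub_mul_norm_le_norm_smul_sub_apply hle x (R x v)
  rwa [norm_sub_rev, hright, ← Real.norm_of_nonneg (sub_nonneg.mpr hx.le),
    ← Complex.norm_real, ← norm_smul] at h

lemma tendsto_sub_smul_resolvent_apply_range [CompleteSpace H] {A : H →L[ℂ] H}
    (hA : IsSelfAdjoint A) {l : ℝ} {R : ℝ → H →L[ℂ] H}
    (hR : ∀ x : ℝ, l < x → (A - (x : ℂ) • 1) * R x = 1 ∧ R x * (A - (x : ℂ) • 1) = 1) (φ : H) :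
    Tendsto (fun x : ℝ => ((x - l : ℝ) : ℂ) • R x ((A - (l : ℂ) • 1) φ)) (𝓝[>] l) (𝓝 0) := by
  have hsplit : (fun x : ℝ => ((x - l : ℝ) : ℂ) • R x ((A - (l : ℂ) • 1) φ)) =ᶠ[𝓝[>] l]
      fun x => ((x - l : ℝ) : ℂ) • φ + ((x - l : ℝ) : ℂ) • (((x - l : ℝ) : ℂ) • R x φ) := by
    filter_upwards [self_mem_nhdsWithin] with x (hx : l < x)
    have hleft : R x (A φ - (x : ℂ) • φ) = φ := by simpa using congr($((hR x hx).2) φ)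
    have hdecomp : (A - (l : ℂ) • 1) φ = (A φ - (x : ℂ) • φ) + ((x - l : ℝ) : ℂ) • φ := by
      simp only [sub_apply, smul_apply, one_apply_eq_self]
      push_cast
      module
    rw [hdecomp, map_add, hleft, map_smul, smul_add]
  refine Tendsto.congr' hsplit.symm ?_
  have hsmall : Tendsto (fun x : ℝ => ((x - l : ℝ) : ℂ)) (𝓝[>] l) (𝓝 0) := by
    have hc : Continuous fun x : ℝ => ((x - l : ℝ) : ℂ) := by fun_prop
    simpa using (hc.tendsto l).mono_left nhdsWithin_le_nhds
  have h₁ : Tendsto (fun x : ℝ => ((x - l : ℝ) : ℂ) • φ) (𝓝[>] l) (𝓝 0) := by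
    simpa using hsmall.smul_const φ
  have h₂ : Tendsto (fun x : ℝ => ((x - l : ℝ) : ℂ) • (((x - l : ℝ) : ℂ) • R x φ))
      (𝓝[>] l) (𝓝 0) := by
    refine squeeze_zero_norm' (a := fun x : ℝ => ‖((x - l : ℝ) : ℂ)‖ * ‖φ‖) ?_
      (by simpa using hsmall.norm.mul_const ‖φ‖)
    filter_upwards [self_mem_nhdsWithin] with x (hx : l < x)
    rw [norm_smul (_ : ℂ) (((x - l : ℝ) : ℂ) • R x φ)]
    gcongr
    exact norm_sub_smul_resolvent_apply_le hA hR hx φ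
  simpa using h₁.add h₂

lemma tendsto_sub_smul_resolvent_apply [CompleteSpace H] {A : H →L[ℂ] H} (hA : IsSelfAdjoint A)
    {l : ℝ} {R : ℝ → H →L[ℂ] H}
    (hR : ∀ x : ℝ, l < x → (A - (x : ℂ) • 1) * R x = 1 ∧ R x * (A - (x : ℂ) • 1) = 1)
    (hker : ∀ u, A u = (l : ℂ) • u → u = 0) (w : H) :
    Tendsto (fun x : ℝ => ((x - l : ℝ) : ℂ) • R x w) (𝓝[>] l) (𝓝 0) := by
  have hnorm : ∀ᶠ x in 𝓝[>] l, ‖((x - l : ℝ) : ℂ) • R x‖ ≤ 1 := by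
    filter_upwards [self_mem_nhdsWithin] with x (hx : l < x)
    refine ContinuousLinearMap.opNorm_le_bound _ zero_le_one fun v => ?_
    rw [one_mul]
    exact norm_sub_smul_resolvent_apply_le hA hR hx v
  have hinj : Function.Injective (A - (l : ℂ) • 1 : H →L[ℂ] H) := by
    refine (injective_iff_map_eq_zero _).mpr fun u hu => hker u ?_
    simpa [sub_eq_zero] using hu
  have hdense : DenseRange (A - (l : ℂ) • 1 : H →L[ℂ] H) :=
    (hA.sub (IsSelfAdjoint.smul (Complex.conj_ofReal l) (.one _))).denseRange_of_injective hinj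
  exact tendsto_zero_of_norm_le_of_denseRange hnorm hdense
    (tendsto_sub_smul_resolvent_apply_range hA hR) w

end Hilbert

section Model

variable {H : Type*} [NormedAddCommGroup H] [InnerProductSpace ℂ H]

def siteFamily (S : H) (e : Bool → ℕ → H) : Option (Bool × ℕ) → H :=
  fun p => p.elim S fun q => e q.1 q.2

lemma eq_zero_of_apply_eq_threshold_smul [CompleteSpace H] {S : H} {e : Bool → ℕ → H}
    (horth : Orthonormal ℂ (siteFamily S e))
    (hspan : (Submodule.span ℂ (range (siteFamily S e))).topologicalClosure = ⊤)
    {A : H →L[ℂ] H} (hA : IsSelfAdjoint A) {τ v : ℝ} (hτ : τ ≠ 0) (hv : 0 ≤ v)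
    (hbias₀ : A (e false 0) = e false 1 + (v : ℂ) • e false 0 + (τ : ℂ) • S)
    (hbias : ∀ m : ℕ,
      A (e false (m + 1)) = e false (m + 2) + e false m + (v : ℂ) • e false (m + 1))
    (hfree₀ : A (e true 0) = e true 1 + (τ : ℂ) • S)
    (hfree : ∀ m : ℕ, A (e true (m + 1)) = e true (m + 2) + e true m)
    {u : H} (hu : A u = ((v + 2 : ℝ) : ℂ) • u) : u = 0 := by
  have hself : ∀ w, inner ℂ (A w) u = ((v + 2 : ℝ) : ℂ) * inner ℂ w u := fun w => by
    rw [← inner_smul_right, ← hu]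
    exact hA.isSymmetric w u
  have hlead : ∀ γ, Tendsto (fun m => inner ℂ (e γ m) u) atTop (𝓝 0) := fun γ => by
    have h := (horth.comp (fun m => some (γ, m)) fun _ _ h => by simpa using h)
      |>.tendsto_inner_cofinite_zero u
    rwa [Nat.cofinite_eq_atTop] at h
  have hb : ∀ m, inner ℂ (e false m) u = 0 := by
    refine eq_zero_of_tendsto_zero_of_sub_eq_sub (fun m => ?_) (hlead false)
    have h := hself (e false (m + 1))
    simp only [hbias, inner_add_left, inner_smul_left, Complex.conj_ofReal] at h
    push_cast at h
    linear_combination h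
  have hS : inner ℂ S u = 0 := by
    have h := hself (e false 0)
    simp only [hbias₀, inner_add_left, inner_smul_left, Complex.conj_ofReal, hb, mul_zero,
      zero_add] at h
    exact (mul_eq_zero.mp h).resolve_left (by exact_mod_cast hτ)
  have hnorm : 2 ≤ ‖((v + 2 : ℝ) : ℂ)‖ := by
    rw [Complex.norm_real, Real.norm_of_nonneg (by linarith)]
    linarith
  have hc : ∀ m, inner ℂ (e true m) u = 0 := by
    refine eq_zero_of_tendsto_zero_of_add_eq_smul hnorm ?_ (fun m => ?_) (hlead true)
    · have h := hself (e true 0)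
      simp only [hfree₀, inner_add_left, inner_smul_left, Complex.conj_ofReal, hS, mul_zero,
        add_zero] at h
      simpa using h
    · have h := hself (e true (m + 1))
      simp only [hfree, inner_add_left] at h
      simpa using h
  refine eq_zero_of_forall_inner_eq_zero hspan ?_
  rintro (_ | ⟨_ | _, m⟩)
  exacts [hS, hb m, hc m]

end Model

theorem stmt14_general (E₀ : ℝ) :
    ∃ τ₀ > (0 : ℝ), ∀ τ : ℝ, τ ≠ 0 → |τ| ≤ τ₀ →
    ∀ vc1 : ℝ, 4 < vc1 → Gf E₀ τ (2 + vc1) vc1 = 0 →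
    ∀ (H : Type) [inst1 : NormedAddCommGroup H] [inst2 : InnerProductSpace ℂ H]
      [inst3 : CompleteSpace H],
    ∀ (S : H) (e : Bool → ℕ → H),
      -- `{S} ∪ {e γ m}` is an orthonormal basis of `H = ℂ ⊕ ℓ²(ℕ₋) ⊕ ℓ²(ℕ₊)`
      Orthonormal ℂ (fun p : Option (Bool × ℕ) => p.elim S fun q => e q.1 q.2) →
      (Submodule.span ℂ
          (Set.range fun p : Option (Bool × ℕ) => p.elim S fun q => e q.1 q.2)).topologicalClosure
        = ⊤ →
    ∀ A : H →L[ℂ] H, IsSelfAdjoint A →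
      -- `A = h(v_{c,1}) = h_S + h_L + v_{c,1} Π₋ + h_T`, `false` labelling the biased lead
      A S = (E₀ : ℂ) • S + (τ : ℂ) • e false 0 + (τ : ℂ) • e true 0 →
      A (e false 0) = e false 1 + (vc1 : ℂ) • e false 0 + (τ : ℂ) • S →
      (∀ m : ℕ, A (e false (m + 1))
          = e false (m + 2) + e false m + (vc1 : ℂ) • e false (m + 1)) →
      A (e true 0) = e true 1 + (τ : ℂ) • S →
      (∀ m : ℕ, A (e true (m + 1)) = e true (m + 2) + e true m) →
    ∀ R : ℝ → (H →L[ℂ] H),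
      (∀ x : ℝ, vc1 + 2 < x →
        (A - (x : ℂ) • 1) * R x = 1 ∧ R x * (A - (x : ℂ) • 1) = 1) →
      (∀ ψ : H, (ψ = S ∨ ∃ γ m, ψ = e γ m) →
        Tendsto (fun x : ℝ => ((x - vc1 - 2 : ℝ) : ℂ) * (inner ℂ ψ (R x ψ) : ℂ))
          (nhdsWithin (vc1 + 2) (Set.Ioi (vc1 + 2))) (nhds 0)) ∧
      (∀ u : H, A u = (((vc1 + 2 : ℝ) : ℂ)) • u → u = 0) := by
  refine ⟨1, one_pos, fun τ hτ _ vc1 hvc1 _ H _ _ _ S e horth hspan A hA _ hbias₀ hbias hfree₀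
    hfree R hR => ?_⟩
  have hker : ∀ u : H, A u = ((vc1 + 2 : ℝ) : ℂ) • u → u = 0 := fun u hu =>
    eq_zero_of_apply_eq_threshold_smul horth hspan hA hτ (by linarith) hbias₀ hbias hfree₀ hfree hu
  refine ⟨fun ψ _ => ?_, hker⟩
  have h := (tendsto_const_nhds (x := ψ)).inner (𝕜 := ℂ)
    (tendsto_sub_smul_resolvent_apply hA hR hker ψ)
  simpa [inner_smul_right, sub_sub] using h

/-- At the critical bias `v = v_{c,1}`, the threshold energy `v_{c,1}+2` is not an
eigenvalue of `h(v_{c,1})`: for every canonical basis vector `ψ` of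
`ℂ ⊕ ℓ²(ℕ) ⊕ ℓ²(ℕ)`, `(x - v_{c,1} - 2)⟨ψ, R(x)ψ⟩ → 0` as `x ↘ v_{c,1}+2`, where
`R(x) = (h(v_{c,1}) - x)⁻¹`; hence the eigenprojection at the threshold vanishes. -/
theorem stmt14 (E₀ : ℝ) (hE : 10 ≤ E₀) :
    ∃ τ₀ > (0 : ℝ), ∀ τ : ℝ, τ ≠ 0 → |τ| ≤ τ₀ →
    ∀ vc1 : ℝ, 4 < vc1 → Gf E₀ τ (2 + vc1) vc1 = 0 →
    ∀ (H : Type) [inst1 : NormedAddCommGroup H] [inst2 : InnerProductSpace ℂ H]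
      [inst3 : CompleteSpace H],
    ∀ (S : H) (e : Bool → ℕ → H),
      -- `{S} ∪ {e γ m}` is an orthonormal basis of `H = ℂ ⊕ ℓ²(ℕ₋) ⊕ ℓ²(ℕ₊)`
      Orthonormal ℂ (fun p : Option (Bool × ℕ) => p.elim S fun q => e q.1 q.2) →
      (Submodule.span ℂ
          (Set.range fun p : Option (Bool × ℕ) => p.elim S fun q => e q.1 q.2)).topologicalClosure
        = ⊤ →
    ∀ A : H →L[ℂ] H, IsSelfAdjoint A →
      -- `A = h(v_{c,1}) = h_S + h_L + v_{c,1} Π₋ + h_T`, `false` labelling the biased lead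
      A S = (E₀ : ℂ) • S + (τ : ℂ) • e false 0 + (τ : ℂ) • e true 0 →
      A (e false 0) = e false 1 + (vc1 : ℂ) • e false 0 + (τ : ℂ) • S →
      (∀ m : ℕ, A (e false (m + 1))
          = e false (m + 2) + e false m + (vc1 : ℂ) • e false (m + 1)) →
      A (e true 0) = e true 1 + (τ : ℂ) • S →
      (∀ m : ℕ, A (e true (m + 1)) = e true (m + 2) + e true m) →
    ∀ R : ℝ → (H →L[ℂ] H),
      (∀ x : ℝ, vc1 + 2 < x →
        (A - (x : ℂ) • 1) * R x = 1 ∧ R x * (A - (x : ℂ) • 1) = 1) →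
      (∀ ψ : H, (ψ = S ∨ ∃ γ m, ψ = e γ m) →
        Tendsto (fun x : ℝ => ((x - vc1 - 2 : ℝ) : ℂ) * (inner ℂ ψ (R x ψ) : ℂ))
          (nhdsWithin (vc1 + 2) (Set.Ioi (vc1 + 2))) (nhds 0)) ∧
      (∀ u : H, A u = (((vc1 + 2 : ℝ) : ℂ)) • u → u = 0) :=
  stmt14_general E₀
end

section
/- Propagation estimate: let U₀(t,w) = e^{-i(t-w)h_L} e^{-(i/η)∫_{ηw}^{ηt} ν(s)ds · Π₋} be the free evolution with time-dependent bias. If f is in the absolutely continuous subspace of h_L with spectral density ⟨Φ_E^±, f⟩ smooth and compactly supported away from ±2, then for every N there is C_{f,N} independent of η with max_{0≤j≤N} |⟨j_±, U₀(t,w)f⟩| ≤ C_{f,N}⟨t-w⟩⁻² for all t ≤ w. -/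
open Complex intervalIntegral
open MeasureTheory FourierTransform Real

/-- Decay of the Fourier-type integral of a `C²` compactly supported function,
obtained by two integrations by parts (expressed via the Fourier transform of
the second derivative). -/
lemma aux_decay17 (f : ℝ → ℂ) (hf : ContDiff ℝ 2 f) (hcs : HasCompactSupport f) :
    ∃ C > 0, ∀ τ : ℝ,
      ‖∫ E : ℝ, Complex.exp (-Complex.I * τ * E) * f E‖ ≤ C / (1 + τ ^ 2) := by
  have hcsn : ∀ n : ℕ, HasCompactSupport (iteratedDeriv n f) := by
    intro n
    induction n with
    | zero => simpa [iteratedDeriv_zero] using hcs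
    | succ k ih => rw [iteratedDeriv_succ]; exact ih.deriv
  have hint : ∀ n : ℕ, (n : ℕ∞) ≤ 2 → Integrable (iteratedDeriv n f) := by
    intro n hn
    have hn' : (n : WithTop ℕ∞) ≤ 2 := by exact_mod_cast hn
    exact (hf.continuous_iteratedDeriv n hn').integrable_of_hasCompactSupport (hcsn n)
  have key := Real.fourier_iteratedDeriv (N := 2) (n := 2) hf hint le_rfl
  set A := ∫ x : ℝ, ‖f x‖ with hAdef
  set B := ∫ x : ℝ, ‖iteratedDeriv 2 f x‖ with hBdef
  have hA : 0 ≤ A := integral_nonneg fun x => norm_nonneg _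
  have hB : 0 ≤ B := integral_nonneg fun x => norm_nonneg _
  refine ⟨A + B + 1, by positivity, fun τ => ?_⟩
  set ξ := τ / (2 * π) with hξdef
  have hπ : (2 * π) ≠ 0 := by positivity
  have hτ : τ = 2 * π * ξ := by rw [hξdef]; field_simp
  have heq : (∫ E : ℝ, Complex.exp (-Complex.I * τ * E) * f E) = 𝓕 f ξ := by
    rw [Real.fourier_real_eq_integral_exp_smul]
    apply MeasureTheory.integral_congr_ae
    filter_upwards with v
    rw [smul_eq_mul]
    congr 1
    have h1 : -2 * π * v * ξ = -(τ * v) := by rw [hτ]; ring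
    rw [h1]
    push_cast
    ring
  have b1 : ‖𝓕 f ξ‖ ≤ A :=
    VectorFourier.norm_fourierIntegral_le_integral_norm _ _ _ _ _
  have b2 : ‖𝓕 (iteratedDeriv 2 f) ξ‖ ≤ B :=
    VectorFourier.norm_fourierIntegral_le_integral_norm _ _ _ _ _
  have b3 : τ ^ 2 * ‖𝓕 f ξ‖ ≤ B := by
    have hn1 : ‖(2 * (π : ℂ) * Complex.I * (ξ : ℂ))‖ = 2 * π * |ξ| := by
      simp [map_mul, Complex.norm_real, Complex.norm_I,
        _root_.abs_of_nonneg Real.pi_nonneg]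
    have hnorm : ‖𝓕 (iteratedDeriv 2 f) ξ‖ = (2 * π * |ξ|) ^ 2 * ‖𝓕 f ξ‖ := by
      rw [key, norm_smul, norm_pow, hn1]
    have hsq : (2 * π * |ξ|) ^ 2 = τ ^ 2 := by
      rw [hτ]; linear_combination (4 * π ^ 2) * _root_.sq_abs ξ
    rw [hnorm, hsq] at b2
    exact b2
  rw [heq, le_div_iff₀ (by positivity)]
  nlinarith [norm_nonneg (𝓕 f ξ), b1, b3]

/-- Smoothness of the amplitude `sin(c · arccos(E/2)) g(E)` for `g` supported in
`[a,b] ⊂ (-2,2)`. -/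
lemma aux_smooth17 (g : ℝ → ℂ) (hg : ContDiff ℝ (⊤ : ℕ∞) g) {a b : ℝ} (ha : -2 < a) (hb : b < 2)
    (hs : ∀ E, g E ≠ 0 → E ∈ Set.Icc a b) (c : ℝ) :
    ContDiff ℝ 2 (fun E : ℝ => (Real.sin (c * Real.arccos (E / 2)) : ℂ) * g E) := by
  rw [contDiff_iff_contDiffAt]
  intro x
  by_cases hx : x ∈ Set.Icc a b
  · have hx1 : x / 2 ≠ -1 := by
      have : -2 < x := lt_of_lt_of_le ha hx.1
      intro h; rw [div_eq_iff (by norm_num : (2:ℝ) ≠ 0)] at h; linarith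
    have hx2 : x / 2 ≠ 1 := by
      have : x < 2 := lt_of_le_of_lt hx.2 hb
      intro h; rw [div_eq_iff (by norm_num : (2:ℝ) ≠ 0)] at h; linarith
    have harc : ContDiffAt ℝ 2 (fun E : ℝ => Real.arccos (E / 2)) x := by
      exact ContDiffAt.comp (g := Real.arccos) (f := fun E : ℝ => E / 2) x (Real.contDiffAt_arccos hx1 hx2)
        ((contDiffAt_id (𝕜 := ℝ) (x := x)).div_const 2)
    have hsin : ContDiffAt ℝ 2 (fun E : ℝ => Real.sin (c * Real.arccos (E / 2))) x :=
      (Real.contDiff_sin.contDiffAt).comp x (harc.const_smul c |>.congr_of_eventuallyEq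
        (by filter_upwards with y; simp [smul_eq_mul]))
    have hof : ContDiffAt ℝ 2 (fun E : ℝ => (Real.sin (c * Real.arccos (E / 2)) : ℂ)) x :=
      Complex.ofRealCLM.contDiff.contDiffAt.comp x hsin
    exact hof.mul ((hg.of_le (WithTop.coe_le_coe.mpr le_top)).contDiffAt)
  · have hopen : IsOpen (Set.Icc a b)ᶜ := isClosed_Icc.isOpen_compl
    have hmem : (Set.Icc a b)ᶜ ∈ nhds x := hopen.mem_nhds hx
    have hev : (fun E : ℝ => (Real.sin (c * Real.arccos (E / 2)) : ℂ) * g E) =ᶠ[nhds x]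
        (fun _ => 0) := by
      filter_upwards [hmem] with y hy
      have : g y = 0 := by
        by_contra h; exact hy (hs y h)
      simp [this]
    exact (contDiffAt_const (c := (0 : ℂ))).congr_of_eventuallyEq hev

/-- The key oscillatory integral estimate, for a single lead and site. -/
lemma aux_main17 (g : ℝ → ℂ) (hg : ContDiff ℝ (⊤ : ℕ∞) g) {a b : ℝ} (ha : -2 < a) (hb : b < 2)
    (hs : ∀ E, g E ≠ 0 → E ∈ Set.Icc a b) (j : ℕ) :
    ∃ C > 0, ∀ τ : ℝ,
      ‖∫ E in (-2 : ℝ)..2, Complex.exp (-Complex.I * τ * E) *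
          Real.sin ((j + 1) * Real.arccos (E / 2)) * g E‖ ≤ C / (1 + τ ^ 2) := by
  set F : ℝ → ℂ := fun E => (Real.sin (((j : ℝ) + 1) * Real.arccos (E / 2)) : ℂ) * g E
    with hFdef
  have hFs : ContDiff ℝ 2 F := aux_smooth17 g hg ha hb hs ((j : ℝ) + 1)
  have hFc : HasCompactSupport F := by
    apply HasCompactSupport.intro (isCompact_Icc (a := a) (b := b))
    intro x hx
    have : g x = 0 := by by_contra h; exact hx (hs x h)
    simp [hFdef, this]
  obtain ⟨C, hC, h⟩ := aux_decay17 F hFs hFc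
  refine ⟨C, hC, fun τ => ?_⟩
  have heq : (∫ E in (-2 : ℝ)..2, Complex.exp (-Complex.I * τ * E) *
      Real.sin ((j + 1) * Real.arccos (E / 2)) * g E)
      = ∫ E : ℝ, Complex.exp (-Complex.I * τ * E) * F E := by
    rw [intervalIntegral.integral_of_le (by norm_num : (-2 : ℝ) ≤ 2)]
    rw [MeasureTheory.setIntegral_eq_integral_of_forall_compl_eq_zero]
    · apply MeasureTheory.integral_congr_ae
      filter_upwards with E
      rw [hFdef, mul_assoc]
    · intro x hx
      have hx' : x ∉ Set.Icc a b := by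
        intro hmem
        exact hx ⟨lt_of_lt_of_le ha hmem.1, le_trans hmem.2 (le_of_lt hb)⟩
      have : g x = 0 := by by_contra h; exact hx' (hs x h)
      simp [this]
  rw [heq]
  exact h τ

/-- Propagation estimate for the free biased evolution
`U₀(t,w) = e^{-i(t-w)h_L} e^{-(i/η)∫_{ηw}^{ηt} ν · Π₋}`.  The lead components of a
vector `f` whose spectral density `g γ` (in the generalized sine-transform
eigenfunction representation `Φ_E(j) = sin((j+1) arccos(E/2))` of `h_±`,
with spectrum `[-2,2]`) is smooth and compactly supported away from `±2` satisfy
`max_{0≤j≤N} |⟨j_±, U₀(t,w)f⟩| ≤ C_{f,N} ⟨t-w⟩⁻²` for `t ≤ w`, with `C_{f,N}`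
independent of `η`.  (`γ = false` is the lead carrying the bias phase.) -/
theorem stmt17 (ν : ℝ → ℝ) (hν : Measurable ν) (M : ℝ) (hM : ∀ x, |ν x| ≤ M)
    (g : Bool → ℝ → ℂ) (hg : ∀ γ, ContDiff ℝ (⊤ : ℕ∞) (g γ))
    (hsupp : ∀ γ, ∃ a b : ℝ, -2 < a ∧ a ≤ b ∧ b < 2 ∧
      ∀ E : ℝ, g γ E ≠ 0 → E ∈ Set.Icc a b) :
    ∀ N : ℕ, ∃ C > (0 : ℝ), ∀ η : ℝ, 0 < η → ∀ (γ : Bool) (j : ℕ), j ≤ N →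
      ∀ t w : ℝ, t ≤ w →
        ‖Complex.exp (-Complex.I *
              (if γ then 0 else ((1 / η : ℝ) * ∫ s in (η * w)..(η * t), ν s : ℝ))) *
            ∫ E in (-2 : ℝ)..2,
              Complex.exp (-Complex.I * (t - w) * E) *
                Real.sin ((j + 1) * Real.arccos (E / 2)) * g γ E‖
          ≤ C / (1 + (t - w) ^ 2) := by
  intro N
  choose a b ha hab hb hs using hsupp
  have key : ∀ (γ : Bool) (j : ℕ), ∃ C > 0, ∀ τ : ℝ,
      ‖∫ E in (-2 : ℝ)..2, Complex.exp (-Complex.I * τ * E) *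
          Real.sin ((j + 1) * Real.arccos (E / 2)) * g γ E‖ ≤ C / (1 + τ ^ 2) :=
    fun γ j => aux_main17 (g γ) (hg γ) (ha γ) (hb γ) (hs γ) j
  choose C hCpos hC using key
  refine ⟨∑ j ∈ Finset.range (N + 1), (C false j + C true j), ?_, ?_⟩
  · apply Finset.sum_pos
    · intro i _; exact add_pos (hCpos false i) (hCpos true i)
    · exact ⟨0, Finset.mem_range.2 (Nat.succ_pos N)⟩
  intro η hη γ j hj t w htw
  rw [norm_mul]
  have h1 : ‖Complex.exp (-Complex.I *
      (if γ then 0 else ((1 / η : ℝ) * ∫ s in (η * w)..(η * t), ν s : ℝ)))‖ = 1 := by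
    cases γ <;> simp [Complex.norm_exp]
  rw [h1, one_mul]
  have h2 : ‖∫ E in (-2 : ℝ)..2, Complex.exp (-Complex.I * (t - w) * E) *
      Real.sin ((j + 1) * Real.arccos (E / 2)) * g γ E‖ ≤ C γ j / (1 + (t - w) ^ 2) := by
    have := hC γ j (t - w)
    simpa [Complex.ofReal_sub] using this
  refine h2.trans ?_
  have hle : C γ j ≤ ∑ i ∈ Finset.range (N + 1), (C false i + C true i) := by
    have hmem : j ∈ Finset.range (N + 1) := Finset.mem_range.2 (Nat.lt_succ_of_le hj)
    have h3 : C γ j ≤ C false j + C true j := by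
      cases γ
      · exact le_add_of_nonneg_right (hCpos true j).le
      · exact le_add_of_nonneg_left (hCpos false j).le
    refine h3.trans ?_
    exact Finset.single_le_sum (f := fun i => C false i + C true i)
      (fun i _ => add_nonneg (hCpos false i).le (hCpos true i).le) hmem
  gcongr
end
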